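/- arXiv:1706.03310 — 5 statements merged into one kernel-verified Lean document; each statement's English description precedes it below -/
import Mathlib

section
/- In a finite-horizon Markov decision model with finite state space, the value function produced by the Bellman backward recursion equals the optimal value: for every initial state x₀ ∈ E, v*₀(x₀) = max over all policies π of the policy value v₀^π(x₀). -/
/-!
Finite-horizon Markov decision model. `policyVal K r rT π n t x` is the expected total
reward collected from time `t` on, with `n` remaining steps (so `n = T - t`), starting at
state `x` and following policy `π`; it is given by the standard backward recursion, which
equals the expectation of cumulated rewards over the controlled Markov chain.
`bellmanVal` is the Bellman backward recursion.
-/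

/-- Policy value via the backward recursion (first argument: remaining steps,
second argument: current time). -/
noncomputable def policyVal {E A : Type*} [Fintype E]
    (K : ℕ → A → E → E → ℝ) (r : ℕ → E → A → ℝ) (rT : E → ℝ)
    (π : ℕ → E → A) : ℕ → ℕ → E → ℝ
  | 0, _ => rT
  | n + 1, t => fun x =>
      r t x (π t x) + ∑ x' : E, K t (π t x) x x' * policyVal K r rT π n (t + 1) x'

/-- Bellman backward recursion (first argument: remaining steps, second: current time). -/
noncomputable def bellmanVal {E A : Type*} [Fintype E] [Fintype A] [Nonempty A]
    (K : ℕ → A → E → E → ℝ) (r : ℕ → E → A → ℝ) (rT : E → ℝ) : ℕ → ℕ → E → ℝ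
  | 0, _ => rT
  | n + 1, t => fun x =>
      ⨆ a : A, (r t x a + ∑ x' : E, K t a x x' * bellmanVal K r rT n (t + 1) x')

/-!
Backward induction. Writing `Q_n(t, x, a)` for the reward of playing `a` at `(t, x)` and then
collecting `v*` afterwards, `v*_{n+1}(t, x) = max_a Q_n(t, x, a)`. Since the transition weights
are nonnegative, every policy value is bounded by `v*` step by step; and the greedy policy, which
picks a maximiser of `Q` at every time and state, attains `v*` exactly.
-/

open Finset

namespace MarkovDecision

variable {E A : Type*} [Fintype E]
  (K : ℕ → A → E → E → ℝ) (r : ℕ → E → A → ℝ) (rT : E → ℝ)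

theorem policyVal_succ (π : ℕ → E → A) (n t : ℕ) (x : E) :
    policyVal K r rT π (n + 1) t x =
      r t x (π t x) + ∑ x' : E, K t (π t x) x x' * policyVal K r rT π n (t + 1) x' :=
  rfl

variable [Fintype A] [Nonempty A]

/-- The action value `Q_n(t, x, a)`: `n` counts the steps remaining after time `t`. -/
noncomputable def bellmanQ (n t : ℕ) (x : E) (a : A) : ℝ :=
  r t x a + ∑ x' : E, K t a x x' * bellmanVal K r rT n (t + 1) x'

theorem bellmanVal_succ (n t : ℕ) (x : E) :
    bellmanVal K r rT (n + 1) t x = ⨆ a, bellmanQ K r rT n t x a :=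
  rfl

theorem bellmanQ_le_bellmanVal_succ (n t : ℕ) (x : E) (a : A) :
    bellmanQ K r rT n t x a ≤ bellmanVal K r rT (n + 1) t x := by
  rw [bellmanVal_succ]
  exact le_ciSup (Finite.bddAbove_range _) a

theorem exists_bellmanQ_eq_bellmanVal_succ (n t : ℕ) (x : E) :
    ∃ a, bellmanQ K r rT n t x a = bellmanVal K r rT (n + 1) t x := by
  rw [bellmanVal_succ]
  exact exists_eq_ciSup_of_finite

noncomputable def greedyPolicy (T : ℕ) (t : ℕ) (x : E) : A :=
  (exists_bellmanQ_eq_bellmanVal_succ K r rT (T - (t + 1)) t x).choose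

theorem policyVal_le_bellmanVal (hK0 : ∀ t a x x', 0 ≤ K t a x x') (π : ℕ → E → A) :
    ∀ n t x, policyVal K r rT π n t x ≤ bellmanVal K r rT n t x
  | 0, _, _ => le_rfl
  | n + 1, t, x => calc
      policyVal K r rT π (n + 1) t x ≤ bellmanQ K r rT n t x (π t x) := by
        rw [policyVal_succ, bellmanQ]
        gcongr with x'
        · exact hK0 t (π t x) x x'
        · exact policyVal_le_bellmanVal hK0 π n (t + 1) x'
      _ ≤ bellmanVal K r rT (n + 1) t x := bellmanQ_le_bellmanVal_succ K r rT n t x (π t x)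

theorem bellmanQ_greedyPolicy {T n t : ℕ} (hnt : n + 1 + t = T) (x : E) :
    bellmanQ K r rT n t x (greedyPolicy K r rT T t x) = bellmanVal K r rT (n + 1) t x := by
  obtain rfl : n = T - (t + 1) := by omega
  exact (exists_bellmanQ_eq_bellmanVal_succ K r rT _ t x).choose_spec

theorem policyVal_greedyPolicy (T : ℕ) :
    ∀ n t, n + t = T → ∀ x,
      policyVal K r rT (greedyPolicy K r rT T) n t x = bellmanVal K r rT n t x
  | 0, _, _, _ => rfl
  | n + 1, t, hnt, x => calc
      policyVal K r rT (greedyPolicy K r rT T) (n + 1) t x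
          = bellmanQ K r rT n t x (greedyPolicy K r rT T t x) := by
        rw [policyVal_succ, bellmanQ]
        congr 1
        refine sum_congr rfl fun x' _ => ?_
        congr 1
        exact policyVal_greedyPolicy T n (t + 1) (by omega) x'
      _ = bellmanVal K r rT (n + 1) t x := bellmanQ_greedyPolicy K r rT hnt x

end MarkovDecision

open MarkovDecision in
theorem bellmanVal_eq_max_policyVal_general {E A : Type*} [Fintype E] [Fintype A] [Nonempty A]
    (T : ℕ) (K : ℕ → A → E → E → ℝ)
    (hK0 : ∀ t a x x', 0 ≤ K t a x x')
    (r : ℕ → E → A → ℝ) (rT : E → ℝ) (x₀ : E) :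
    IsGreatest {y : ℝ | ∃ π : ℕ → E → A, y = policyVal K r rT π T 0 x₀}
      (bellmanVal K r rT T 0 x₀) := by
  refine ⟨⟨greedyPolicy K r rT T, (policyVal_greedyPolicy K r rT T T 0 rfl x₀).symm⟩, ?_⟩
  rintro y ⟨π, rfl⟩
  exact policyVal_le_bellmanVal K r rT hK0 π T 0 x₀

/-- In a finite-horizon Markov decision model with finite state space, the value function
produced by the Bellman backward recursion equals the optimal value: for every initial
state `x₀`, `v*₀(x₀)` is the maximum over all policies `π` of the policy value `v₀^π(x₀)`. -/
theorem bellmanVal_eq_max_policyVal {E A : Type*} [Fintype E] [Fintype A] [Nonempty A]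
    (T : ℕ) (K : ℕ → A → E → E → ℝ)
    (hK0 : ∀ t a x x', 0 ≤ K t a x x')
    (hK1 : ∀ t a x, ∑ x' : E, K t a x x' = 1)
    (r : ℕ → E → A → ℝ) (rT : E → ℝ) (x₀ : E) :
    IsGreatest {y : ℝ | ∃ π : ℕ → E → A, y = policyVal K r rT π T 0 x₀}
      (bellmanVal K r rT T 0 x₀) :=
  bellmanVal_eq_max_policyVal_general T K hK0 r rT x₀
end

section
/- In a finite-horizon Markov decision model with finite state space, any greedy policy with respect to the Bellman value functions is optimal: if π*_t(x) attains the maximum in max_{a∈A} ( r_t(x,a) + Σ_{x'∈E} K_t^a(x,x') v*_{t+1}(x') ) for every t < T and x ∈ E, then the policy value of π* satisfies v₀^{π*}(x₀) = v*₀(x₀) for every initial state x₀ ∈ E. -/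
section

variable {E A : Type*} [Fintype E] [Fintype A] [Nonempty A]
  (K : ℕ → A → E → E → ℝ) (r : ℕ → E → A → ℝ) (rT : E → ℝ) (π : ℕ → E → A)

theorem policyVal_succ_eq_bellmanVal_succ {n t : ℕ}
    (hgreedy : ∀ x : E,
      r t x (π t x) + ∑ x' : E, K t (π t x) x x' * bellmanVal K r rT n (t + 1) x' =
        bellmanVal K r rT (n + 1) t x)
    (hnext : policyVal K r rT π n (t + 1) = bellmanVal K r rT n (t + 1)) :
    policyVal K r rT π (n + 1) t = bellmanVal K r rT (n + 1) t := by
  funext x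
  rw [policyVal, hnext]
  exact hgreedy x

theorem policyVal_eq_bellmanVal_of_greedy {T : ℕ}
    (hgreedy : ∀ t, t < T → ∀ x : E,
      r t x (π t x) + ∑ x' : E, K t (π t x) x x' * bellmanVal K r rT (T - (t + 1)) (t + 1) x' =
        bellmanVal K r rT (T - t) t x) :
    ∀ n t, t + n = T → policyVal K r rT π n t = bellmanVal K r rT n t
  | 0, _, _ => rfl
  | n + 1, t, htn => by
    refine policyVal_succ_eq_bellmanVal_succ K r rT π (fun x => ?_)
      (policyVal_eq_bellmanVal_of_greedy hgreedy n (t + 1) (by omega))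
    have hstep := hgreedy t (by omega) x
    rwa [show T - t = n + 1 by omega, show T - (t + 1) = n by omega] at hstep

end

theorem greedy_policy_optimal_general {E A : Type*} [Fintype E] [Fintype A] [Nonempty A]
    (T : ℕ) (K : ℕ → A → E → E → ℝ)
    (r : ℕ → E → A → ℝ) (rT : E → ℝ)
    (πs : ℕ → E → A)
    (hgreedy : ∀ t, t < T → ∀ x : E,
      r t x (πs t x) +
          ∑ x' : E, K t (πs t x) x x' * bellmanVal K r rT (T - (t + 1)) (t + 1) x' =
        bellmanVal K r rT (T - t) t x) :
    ∀ x₀ : E, policyVal K r rT πs T 0 x₀ = bellmanVal K r rT T 0 x₀ := by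
  intro x₀
  rw [policyVal_eq_bellmanVal_of_greedy K r rT πs hgreedy T 0 (zero_add T)]

/-- Any greedy policy with respect to the Bellman value functions is optimal: if for every
`t < T` and every state `x` the action `π* t x` attains the maximum in the Bellman recursion
(i.e. its one-step value equals `v*ₜ(x)`), then the value of the policy `π*` coincides with the
Bellman value function at time `0`, for every initial state `x₀`. -/
theorem greedy_policy_optimal {E A : Type*} [Fintype E] [Fintype A] [Nonempty A]
    (T : ℕ) (K : ℕ → A → E → E → ℝ)
    (hK0 : ∀ t a x x', 0 ≤ K t a x x')
    (hK1 : ∀ t a x, ∑ x' : E, K t a x x' = 1)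
    (r : ℕ → E → A → ℝ) (rT : E → ℝ)
    (πs : ℕ → E → A)
    (hgreedy : ∀ t, t < T → ∀ x : E,
      r t x (πs t x) +
          ∑ x' : E, K t (πs t x) x x' * bellmanVal K r rT (T - (t + 1)) (t + 1) x' =
        bellmanVal K r rT (T - t) t x) :
    ∀ x₀ : E, policyVal K r rT πs T 0 x₀ = bellmanVal K r rT T 0 x₀ :=
  greedy_policy_optimal_general T K r rT πs hgreedy
end

section
/- Verification inequality: in a finite-horizon Markov decision model with finite state space, for every policy π and every initial state x₀ ∈ E, the policy value is dominated by the Bellman value function: v₀^π(x₀) ≤ v*₀(x₀). -/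
/-!
By backward induction on the number of remaining steps: since the transition weights are
nonnegative, replacing the continuation value of `π` by the larger Bellman value can only increase
the one-step lookahead, and the Bellman value is the maximum of that lookahead over all actions,
in particular at the action `π` chooses.
-/

section

variable {E A : Type*} [Fintype E] [Fintype A] [Nonempty A]
  (K : ℕ → A → E → E → ℝ) (r : ℕ → E → A → ℝ) (rT : E → ℝ)

theorem lookahead_le_bellmanVal_succ (n t : ℕ) (x : E) (a : A) :
    r t x a + ∑ x' : E, K t a x x' * bellmanVal K r rT n (t + 1) x' ≤
      bellmanVal K r rT (n + 1) t x :=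
  le_ciSup (f := fun a => r t x a + ∑ x' : E, K t a x x' * bellmanVal K r rT n (t + 1) x')
    (Finite.bddAbove_range _) a

theorem policyVal_le_bellmanVal_of_nonneg (hK0 : ∀ t a x x', 0 ≤ K t a x x')
    (π : ℕ → E → A) (n t : ℕ) (x : E) :
    policyVal K r rT π n t x ≤ bellmanVal K r rT n t x := by
  induction n generalizing t x with
  | zero => exact le_rfl
  | succ n ih =>
    calc policyVal K r rT π (n + 1) t x
        = r t x (π t x) + ∑ x' : E, K t (π t x) x x' * policyVal K r rT π n (t + 1) x' := rfl
      _ ≤ r t x (π t x) + ∑ x' : E, K t (π t x) x x' * bellmanVal K r rT n (t + 1) x' := by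
        gcongr with x' _
        · exact hK0 t _ x x'
        · exact ih (t + 1) x'
      _ ≤ bellmanVal K r rT (n + 1) t x := lookahead_le_bellmanVal_succ K r rT n t x (π t x)

end

theorem policyVal_le_bellmanVal_general {E A : Type*} [Fintype E] [Fintype A] [Nonempty A]
    (T : ℕ) (K : ℕ → A → E → E → ℝ)
    (hK0 : ∀ t a x x', 0 ≤ K t a x x')
    (r : ℕ → E → A → ℝ) (rT : E → ℝ)
    (π : ℕ → E → A) (x₀ : E) :
    policyVal K r rT π T 0 x₀ ≤ bellmanVal K r rT T 0 x₀ :=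
  policyVal_le_bellmanVal_of_nonneg K r rT hK0 π T 0 x₀

/-- Verification inequality: for every policy `π` and every initial state `x₀`, the policy value
is dominated by the Bellman value function: `v₀^π(x₀) ≤ v*₀(x₀)`. -/
theorem policyVal_le_bellmanVal {E A : Type*} [Fintype E] [Fintype A] [Nonempty A]
    (T : ℕ) (K : ℕ → A → E → E → ℝ)
    (hK0 : ∀ t a x x', 0 ≤ K t a x x')
    (hK1 : ∀ t a x, ∑ x' : E, K t a x x' = 1)
    (r : ℕ → E → A → ℝ) (rT : E → ℝ)
    (π : ℕ → E → A) (x₀ : E) :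
    policyVal K r rT π T 0 x₀ ≤ bellmanVal K r rT T 0 x₀ :=
  policyVal_le_bellmanVal_general T K hK0 r rT π x₀
end

section
/- Matrix representation of the subgradient envelope of a sum: let F₁, F₂ be real matrices with d columns (with m₁ and m₂ rows respectively, m₁, m₂ ≥ 1) and let G = (g¹,…,g^k) be a grid in ℝ^d. Then the function z ↦ max_{1≤i≤k} ⟨(Υ_G F₁)_i + (Υ_G F₂)_i, z⟩, i.e. f_{Υ_G F₁ + Υ_G F₂}, satisfies f_{Υ_G F₁ + Υ_G F₂}(z) ≤ f_{F₁}(z) + f_{F₂}(z) for all z ∈ ℝ^d, with equality f_{Υ_G F₁ + Υ_G F₂}(gⁱ) = f_{F₁}(gⁱ) + f_{F₂}(gⁱ) at every grid point gⁱ. -/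
open Matrix

/-- The piecewise linear convex function `f_F(z) = max_{1 ≤ i ≤ m} ⟨F_i, z⟩` determined by the
rows of a matrix `F` (maximum of the dot products of the rows with `z`). -/
noncomputable def pwl {m d : ℕ} (F : Matrix (Fin m) (Fin d) ℝ) (z : Fin d → ℝ) : ℝ :=
  ⨆ i : Fin m, F i ⬝ᵥ z

/-- The least row index of `F` attaining `max_j ⟨F_j, g⟩`. -/
noncomputable def argmaxRow {m d : ℕ} [NeZero m] (F : Matrix (Fin m) (Fin d) ℝ)
    (g : Fin d → ℝ) : Fin m :=
  (Finset.univ.filter fun j => ∀ j' : Fin m, F j' ⬝ᵥ g ≤ F j ⬝ᵥ g).min' (by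
    obtain ⟨j, -, hj⟩ :=
      Finset.exists_max_image (Finset.univ : Finset (Fin m)) (fun j => F j ⬝ᵥ g)
        Finset.univ_nonempty
    refine ⟨j, ?_⟩
    simp only [Finset.mem_filter, Finset.mem_univ, true_and]
    exact fun j' => hj j' (Finset.mem_univ _))

/-- The row-rearrangement operator `Υ_G`: the `i`-th row of `Υ_G F` is the row of `F` of least
index attaining `max_j ⟨F_j, gⁱ⟩`. -/
noncomputable def rearrange {m d k : ℕ} [NeZero m] (F : Matrix (Fin m) (Fin d) ℝ)
    (G : Fin k → Fin d → ℝ) : Matrix (Fin k) (Fin d) ℝ :=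
  fun i => F (argmaxRow F (G i))

/-! Every row of `Υ_G F` is a row of `F`, so `f_{Υ_G F₁ + Υ_G F₂} ≤ f_{Υ_G F₁} + f_{Υ_G F₂}
≤ f_{F₁} + f_{F₂}`. At `gⁱ` the `i`-th row of `Υ_G F₁ + Υ_G F₂` is the sum of a maximiser for
`F₁` and one for `F₂`, so it already reaches `f_{F₁}(gⁱ) + f_{F₂}(gⁱ)`. -/

section Pwl

variable {m d : ℕ}

lemma dotProduct_le_pwl (F : Matrix (Fin m) (Fin d) ℝ) (z : Fin d → ℝ) (i : Fin m) :
    F i ⬝ᵥ z ≤ pwl F z :=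
  le_ciSup (f := fun i => F i ⬝ᵥ z) (Finite.bddAbove_range _) i

lemma add_row_dotProduct (A B : Matrix (Fin m) (Fin d) ℝ) (i : Fin m) (z : Fin d → ℝ) :
    (A + B) i ⬝ᵥ z = A i ⬝ᵥ z + B i ⬝ᵥ z :=
  add_dotProduct (A i) (B i) z

lemma pwl_add_le [NeZero m] (A B : Matrix (Fin m) (Fin d) ℝ) (z : Fin d → ℝ) :
    pwl (A + B) z ≤ pwl A z + pwl B z :=
  ciSup_le fun i => by
    rw [add_row_dotProduct]
    exact add_le_add (dotProduct_le_pwl A z i) (dotProduct_le_pwl B z i)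

lemma dotProduct_le_argmaxRow [NeZero m] (F : Matrix (Fin m) (Fin d) ℝ) (g : Fin d → ℝ)
    (j : Fin m) : F j ⬝ᵥ g ≤ F (argmaxRow F g) ⬝ᵥ g := by
  have h : argmaxRow F g ∈ Finset.univ.filter fun j => ∀ j', F j' ⬝ᵥ g ≤ F j ⬝ᵥ g :=
    Finset.min'_mem _ _
  exact (Finset.mem_filter.mp h).2 j

lemma pwl_eq_dotProduct_argmaxRow [NeZero m] (F : Matrix (Fin m) (Fin d) ℝ) (g : Fin d → ℝ) :
    pwl F g = F (argmaxRow F g) ⬝ᵥ g :=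
  le_antisymm (ciSup_le (dotProduct_le_argmaxRow F g)) (dotProduct_le_pwl F g _)

end Pwl

section Rearrange

variable {m d k : ℕ} [NeZero m]

lemma pwl_rearrange_le [NeZero k] (F : Matrix (Fin m) (Fin d) ℝ) (G : Fin k → Fin d → ℝ)
    (z : Fin d → ℝ) : pwl (rearrange F G) z ≤ pwl F z :=
  ciSup_le fun _ => dotProduct_le_pwl F z _

lemma rearrange_dotProduct_grid (F : Matrix (Fin m) (Fin d) ℝ) (G : Fin k → Fin d → ℝ)
    (i : Fin k) : rearrange F G i ⬝ᵥ G i = pwl F (G i) :=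
  (pwl_eq_dotProduct_argmaxRow F (G i)).symm

end Rearrange

/-- Matrix representation of the subgradient envelope of a sum:
`f_{Υ_G F₁ + Υ_G F₂} ≤ f_{F₁} + f_{F₂}` everywhere, with equality at every grid point. -/
theorem rearrange_sum_le_and_eq_on_grid {m₁ m₂ d k : ℕ} [NeZero m₁] [NeZero m₂] [NeZero k]
    (F₁ : Matrix (Fin m₁) (Fin d) ℝ) (F₂ : Matrix (Fin m₂) (Fin d) ℝ)
    (G : Fin k → Fin d → ℝ) :
    (∀ z : Fin d → ℝ, pwl (rearrange F₁ G + rearrange F₂ G) z ≤ pwl F₁ z + pwl F₂ z) ∧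
      ∀ i : Fin k, pwl (rearrange F₁ G + rearrange F₂ G) (G i) = pwl F₁ (G i) + pwl F₂ (G i) := by
  have sum_le (z : Fin d → ℝ) :
      pwl (rearrange F₁ G + rearrange F₂ G) z ≤ pwl F₁ z + pwl F₂ z :=
    (pwl_add_le _ _ z).trans (add_le_add (pwl_rearrange_le F₁ G z) (pwl_rearrange_le F₂ G z))
  refine ⟨sum_le, fun i => le_antisymm (sum_le (G i)) ?_⟩
  calc pwl F₁ (G i) + pwl F₂ (G i)
      = (rearrange F₁ G + rearrange F₂ G) i ⬝ᵥ G i := by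
        rw [add_row_dotProduct, rearrange_dotProduct_grid, rearrange_dotProduct_grid]
    _ ≤ pwl (rearrange F₁ G + rearrange F₂ G) (G i) := dotProduct_le_pwl _ _ i
end

section
/- The sampled (modified) Bellman operator preserves piecewise linear convexity: let P and A be finite nonempty sets, let (α^a_{p,p'}) be nonnegative reals, let ν(1),…,ν(N) be nonnegative weights, let W(1),…,W(N) be d×d real matrices, and for each p ∈ P, a ∈ A and p' ∈ P let R(p,a) and V(p') be real matrices with d columns. Then for each p ∈ P the function z ↦ max_{a∈A} ( f_{R(p,a)}(z) + Σ_{n=1}^{N} ν(n) Σ_{p'∈P} α^a_{p,p'} f_{V(p')}(W(n) z) ) equals f_{F} for some real matrix F with d columns; in particular it is convex and is a maximum of finitely many linear functionals of z. -/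
/-!
Call a function a max of linear forms if it is the pointwise maximum of finitely many (at least
one) linear functionals. Every `f_F` is one, and the class is closed under precomposition with
linear maps, multiplication by nonnegative scalars, sums (a sum of maxima is the maximum over
pairs of the sums) and finite maxima (a maximum of maxima is the maximum over the disjoint union
of the index sets). So the Bellman expression is a max of linear forms; such a function is convex,
and on `ℝ^d` it is `f_F` for the matrix whose rows are the linear forms.
-/

open Matrix

theorem Finite.ciSup_add_ciSup {α ι κ : Type*} [ConditionallyCompleteLinearOrder α] [Add α]
    [AddLeftMono α] [AddRightMono α] [Finite ι] [Nonempty ι] [Finite κ] [Nonempty κ]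
    (f : ι → α) (g : κ → α) :
    (⨆ i, f i) + (⨆ j, g j) = ⨆ x : ι × κ, f x.1 + g x.2 := by
  obtain ⟨i, hi⟩ := exists_eq_ciSup_of_finite (f := f)
  obtain ⟨j, hj⟩ := exists_eq_ciSup_of_finite (f := g)
  refine le_antisymm ?_ (ciSup_le fun x => add_le_add (le_ciSup f x.1) (le_ciSup g x.2))
  rw [← hi, ← hj]
  exact le_ciSup_of_le (i, j) le_rfl

theorem Finite.ciSup_ciSup_eq_ciSup_sigma {α β : Type*} [ConditionallyCompleteLattice α]
    [Finite β] [Nonempty β] {κ : β → Type*} [∀ b, Finite (κ b)] [∀ b, Nonempty (κ b)]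
    (f : ∀ b, κ b → α) : ⨆ b, ⨆ j, f b j = ⨆ x : Σ b, κ b, f x.1 x.2 := by
  have : Nonempty (Σ b, κ b) := ⟨⟨Classical.arbitrary β, Classical.arbitrary _⟩⟩
  refine le_antisymm (ciSup_le fun b => ciSup_le fun j => le_ciSup_of_le ⟨b, j⟩ le_rfl) ?_
  exact ciSup_le fun x => le_ciSup_of_le x.1 (le_ciSup_of_le x.2 le_rfl)

theorem convexOn_ciSup_of_finite {E ι : Type*} [AddCommMonoid E] [Module ℝ E] [Finite ι]
    [Nonempty ι] {s : Set E} {f : ι → E → ℝ} (hf : ∀ i, ConvexOn ℝ s (f i)) :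
    ConvexOn ℝ s (fun x => ⨆ i, f i x) := by
  refine ⟨(hf (Classical.arbitrary ι)).1, fun x hx y hy a b ha hb hab => ciSup_le fun i => ?_⟩
  refine ((hf i).2 hx hy ha hb hab).trans ?_
  gcongr <;> exact Finite.le_ciSup (fun j => f j _) i

def IsMaxOfLinearForms {E : Type*} [AddCommMonoid E] [Module ℝ E] (f : E → ℝ) : Prop :=
  ∃ (ι : Type) (_ : Finite ι) (_ : Nonempty ι) (g : ι → Module.Dual ℝ E),
    f = fun z => ⨆ i, g i z

namespace IsMaxOfLinearForms

variable {E E' : Type*} [AddCommMonoid E] [Module ℝ E] [AddCommMonoid E'] [Module ℝ E']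
  {f g : E → ℝ}

theorem zero : IsMaxOfLinearForms (fun _ : E => (0 : ℝ)) :=
  ⟨Unit, inferInstance, inferInstance, fun _ => 0, by simp⟩

theorem comp (hf : IsMaxOfLinearForms f) (L : E' →ₗ[ℝ] E) :
    IsMaxOfLinearForms (fun z => f (L z)) := by
  obtain ⟨ι, _, _, u, rfl⟩ := hf
  exact ⟨ι, inferInstance, inferInstance, fun i => (u i).comp L, rfl⟩

theorem const_mul (hf : IsMaxOfLinearForms f) {c : ℝ} (hc : 0 ≤ c) :
    IsMaxOfLinearForms (fun z => c * f z) := by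
  obtain ⟨ι, _, _, u, rfl⟩ := hf
  refine ⟨ι, inferInstance, inferInstance, fun i => c • u i, funext fun z => ?_⟩
  simp only [LinearMap.smul_apply, smul_eq_mul, Real.mul_iSup_of_nonneg hc]

theorem add (hf : IsMaxOfLinearForms f) (hg : IsMaxOfLinearForms g) :
    IsMaxOfLinearForms (fun z => f z + g z) := by
  obtain ⟨ι, _, _, u, rfl⟩ := hf
  obtain ⟨κ, _, _, v, rfl⟩ := hg
  refine ⟨ι × κ, inferInstance, inferInstance, fun x => u x.1 + v x.2, funext fun z => ?_⟩
  simp only [LinearMap.add_apply, Finite.ciSup_add_ciSup]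

theorem sum {κ : Type*} (s : Finset κ) {f : κ → E → ℝ} (hf : ∀ k ∈ s, IsMaxOfLinearForms (f k)) :
    IsMaxOfLinearForms (fun z => ∑ k ∈ s, f k z) := by
  induction s using Finset.cons_induction with
  | empty => simpa using zero
  | cons a s _ ih =>
    simp only [Finset.sum_cons]
    exact (hf a (s.mem_cons_self a)).add (ih fun k hk => hf k (Finset.mem_cons_of_mem hk))

theorem iSup {κ : Type*} [Finite κ] {f : κ → E → ℝ} (hf : ∀ k, IsMaxOfLinearForms (f k)) :
    IsMaxOfLinearForms (fun z => ⨆ k, f k z) := by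
  cases isEmpty_or_nonempty κ with
  | inl _ => simpa using zero
  | inr _ =>
    -- reindex by `Fin n`, so that the disjoint union of the index types lives in `Type`
    obtain ⟨n, ⟨e⟩⟩ := Finite.exists_equiv_fin κ
    have : Nonempty (Fin n) := ⟨e (Classical.arbitrary κ)⟩
    choose ι _ _ u hu using fun j => hf (e.symm j)
    have : Nonempty (Σ j, ι j) := ⟨⟨Classical.arbitrary _, Classical.arbitrary _⟩⟩
    refine ⟨Σ j, ι j, inferInstance, inferInstance, fun x => u x.1 x.2, funext fun z => ?_⟩
    rw [← e.symm.iSup_comp]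
    simp only [hu, Finite.ciSup_ciSup_eq_ciSup_sigma]

theorem convexOn (hf : IsMaxOfLinearForms f) : ConvexOn ℝ Set.univ f := by
  obtain ⟨ι, _, _, u, rfl⟩ := hf
  exact convexOn_ciSup_of_finite fun i => (u i).convexOn convex_univ

end IsMaxOfLinearForms

theorem isMaxOfLinearForms_pwl {m d : ℕ} (F : Matrix (Fin m) (Fin d) ℝ) :
    IsMaxOfLinearForms (pwl F) := by
  cases m with
  | zero =>
    -- an empty supremum in `ℝ` is the junk value `0`, which is still a linear form
    rw [show pwl F = fun _ => 0 from funext fun z => Real.iSup_of_isEmpty _]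
    exact IsMaxOfLinearForms.zero
  | succ m => exact ⟨Fin (m + 1), inferInstance, inferInstance,
      fun i => dotProductEquiv ℝ (Fin d) (F i), rfl⟩

theorem IsMaxOfLinearForms.exists_pwl_eq {d : ℕ} {f : (Fin d → ℝ) → ℝ}
    (hf : IsMaxOfLinearForms f) :
    ∃ (m : ℕ) (F : Matrix (Fin m) (Fin d) ℝ), 0 < m ∧ f = pwl F := by
  obtain ⟨ι, _, _, u, rfl⟩ := hf
  have := Fintype.ofFinite ι
  let e := Fintype.equivFin ι
  refine ⟨Fintype.card ι, fun i => (dotProductEquiv ℝ (Fin d)).symm (u (e.symm i)),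
    Fintype.card_pos, funext fun z => ?_⟩
  simp only [pwl, ← dotProductEquiv_apply_apply, LinearEquiv.apply_symm_apply]
  exact (e.symm.iSup_comp (g := fun i => u i z)).symm

theorem sampled_bellman_pwl_general {d N : ℕ} {P A : Type*}
    [Fintype P] [Fintype A]
    (α : A → P → P → ℝ) (hα : ∀ a p p', 0 ≤ α a p p')
    (ν : Fin N → ℝ) (hν : ∀ n, 0 ≤ ν n)
    (W : Fin N → Matrix (Fin d) (Fin d) ℝ)
    (mR : P → A → ℕ)
    (mV : P → ℕ)
    (R : (p : P) → (a : A) → Matrix (Fin (mR p a)) (Fin d) ℝ)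
    (V : (p' : P) → Matrix (Fin (mV p')) (Fin d) ℝ) (p : P) :
    ∃ (m : ℕ) (F : Matrix (Fin m) (Fin d) ℝ), 0 < m ∧
      (∀ z : Fin d → ℝ,
        (⨆ a : A, (pwl (R p a) z +
          ∑ n : Fin N, ν n * ∑ p' : P, α a p p' * pwl (V p') (W n *ᵥ z))) = pwl F z) ∧
      ConvexOn ℝ Set.univ (fun z : Fin d → ℝ =>
        ⨆ a : A, (pwl (R p a) z +
          ∑ n : Fin N, ν n * ∑ p' : P, α a p p' * pwl (V p') (W n *ᵥ z))) := by
  have hmax : IsMaxOfLinearForms (fun z : Fin d → ℝ =>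
      ⨆ a : A, (pwl (R p a) z +
        ∑ n : Fin N, ν n * ∑ p' : P, α a p p' * pwl (V p') (W n *ᵥ z))) := by
    refine .iSup fun a => (isMaxOfLinearForms_pwl _).add <| .sum _ fun n _ => .const_mul ?_ (hν n)
    exact .sum _ fun p' _ =>
      ((isMaxOfLinearForms_pwl (V p')).comp (W n).mulVecLin).const_mul (hα a p p')
  obtain ⟨m, F, hm, hF⟩ := hmax.exists_pwl_eq
  exact ⟨m, F, hm, congrFun hF, hmax.convexOn⟩

/-- The sampled (modified) Bellman operator preserves piecewise linear convexity: for finite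
nonempty `P`, `A`, nonnegative `α^a_{p,p'}`, nonnegative weights `ν(1),…,ν(N)`, matrices
`W(1),…,W(N)` and matrix representatives `R(p,a)`, `V(p')` (with `d` columns and at least one
row each), for each `p` the function
`z ↦ max_{a} ( f_{R(p,a)}(z) + Σ_n ν(n) Σ_{p'} α^a_{p,p'} f_{V(p')}(W(n) z) )`
equals `f_F` for some matrix `F` with `d` columns and at least one row; in particular it is
convex and is a maximum of finitely many linear functionals. -/
theorem sampled_bellman_pwl {d N : ℕ} {P A : Type*}
    [Fintype P] [Nonempty P] [Fintype A] [Nonempty A]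
    (α : A → P → P → ℝ) (hα : ∀ a p p', 0 ≤ α a p p')
    (ν : Fin N → ℝ) (hν : ∀ n, 0 ≤ ν n)
    (W : Fin N → Matrix (Fin d) (Fin d) ℝ)
    (mR : P → A → ℕ) (hmR : ∀ p a, 0 < mR p a)
    (mV : P → ℕ) (hmV : ∀ p', 0 < mV p')
    (R : (p : P) → (a : A) → Matrix (Fin (mR p a)) (Fin d) ℝ)
    (V : (p' : P) → Matrix (Fin (mV p')) (Fin d) ℝ) (p : P) :
    ∃ (m : ℕ) (F : Matrix (Fin m) (Fin d) ℝ), 0 < m ∧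
      (∀ z : Fin d → ℝ,
        (⨆ a : A, (pwl (R p a) z +
          ∑ n : Fin N, ν n * ∑ p' : P, α a p p' * pwl (V p') (W n *ᵥ z))) = pwl F z) ∧
      ConvexOn ℝ Set.univ (fun z : Fin d → ℝ =>
        ⨆ a : A, (pwl (R p a) z +
          ∑ n : Fin N, ν n * ∑ p' : P, α a p p' * pwl (V p') (W n *ᵥ z))) :=
  sampled_bellman_pwl_general α hα ν hν W mR mV R V p
end
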